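/- With the subdivision setup below, for n ≥ 2, (1/#S) Σ_{σ∈S} Σ_{i=1}^{e'} ‖μ(X^σ_i) − μ(X')‖² = e'·(Rg²(M') + ‖μ(X', deg) − μ(X')‖²) + (n²(n+1)/(12(n−1)²)) Σ_{i=1}^{e'} Rg²(W_i), where M' is the point cloud of edge midpoints m'_i = (X'(head i) + X'(tail i))/2 with unit weights, μ(X', deg) is the degree-weighted center of mass of X' with deg(k) = #{i : head i = k} + #{i : tail i = k} (assumed positive for every k), μ(X') is the unit-weight center of mass of the junction positions, and W_i = (w(i,1),…,w(i,n)) is a point cloud with unit weights. -/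

import Mathlib

open Finset

/-- Center of mass of a weighted point cloud. -/
noncomputable def com {V : Type*} [Fintype V] {d : ℕ}
    (X : V → EuclideanSpace ℝ (Fin d)) (Ω : V → ℝ) : EuclideanSpace ℝ (Fin d) :=
  (∑ v, Ω v)⁻¹ • ∑ v, Ω v • X v

/-- Weighted squared radius of gyration of a point cloud. -/
noncomputable def rg2 {V : Type*} [Fintype V] {d : ℕ}
    (X : V → EuclideanSpace ℝ (Fin d)) (Ω : V → ℝ) : ℝ :=
  (∑ v, Ω v)⁻¹ * ∑ v, Ω v * ‖X v - com X Ω‖ ^ 2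

/-- Center of mass with unit weights. -/
noncomputable def uMu {V : Type*} [Fintype V] {d : ℕ}
    (X : V → EuclideanSpace ℝ (Fin d)) : EuclideanSpace ℝ (Fin d) :=
  (Fintype.card V : ℝ)⁻¹ • ∑ v, X v

/-- Squared radius of gyration with unit weights. -/
noncomputable def uRg2 {V : Type*} [Fintype V] {d : ℕ}
    (X : V → EuclideanSpace ℝ (Fin d)) : ℝ :=
  (Fintype.card V : ℝ)⁻¹ * ∑ v, ‖X v - uMu X‖ ^ 2

/-- Position of the `j`-th intermediate vertex (1-indexed position `j+1`) on the
subdivided edge `i`, for the permuted displacement vectors: `x^σ_{i,j}` equals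
`X'(tail i)` plus the first `j+1` permuted displacements. -/
noncomputable def xpos {d n v' e' : ℕ}
    (X' : Fin v' → EuclideanSpace ℝ (Fin d)) (tl : Fin e' → Fin v')
    (w : Fin e' → Fin n → EuclideanSpace ℝ (Fin d))
    (σ : Fin e' → Equiv.Perm (Fin n)) (i : Fin e') (j : Fin (n - 1)) :
    EuclideanSpace ℝ (Fin d) :=
  X' (tl i) + ∑ k : Fin n, if (k : ℕ) ≤ (j : ℕ) then w i (σ i k) else 0

/-!
Write `w i k = w̄ᵢ + uᵢ k` with `w̄ᵢ = (X' (head i) - X' (tl i)) / n`, so that `∑ₖ uᵢ k = 0`. The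
mean of the interior points of edge `i` is `X' (tl i) + ∑ₖ aₖ • w i (σᵢ k)` with
`aₖ = (n - 1 - k) / (n - 1)`; since `∑ₖ aₖ = n / 2`, this is the midpoint `m'ᵢ` plus the fluctuation
`∑ₖ aₖ • uᵢ (σᵢ k)`, whose sum over `σᵢ` vanishes.

For a uniformly random permutation `π` and `S = ∑ₘ ‖u m‖²`, double transitivity and `∑ u = 0` give
`E⟪u (π k), u (π l)⟫ = (n δₖₗ - 1) S / (n (n - 1))`, hence
`E‖∑ₖ aₖ • u (π k)‖² = (n ∑ a² - (∑ a)²) S / (n (n - 1))`, which for the weights above is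
`n² (n + 1) / (12 (n - 1)²) · Rg²(Wᵢ)`. What remains, `∑ᵢ ‖m'ᵢ - μ(X')‖²`, splits by the parallel
axis theorem, and the mean of the edge midpoints is the degree-weighted centre of mass of `X'`.
-/

open scoped RealInnerProductSpace

section PermutationSums

variable {α : Type*} [Fintype α] [DecidableEq α]

theorem sum_perm_comp_eq_of_injective {β M : Type*} [Finite β] [AddCommMonoid M]
    (F : (β → α) → M) {f g : β → α} (hf : f.Injective) (hg : g.Injective) :
    ∑ π : Equiv.Perm α, F (π ∘ f) = ∑ π : Equiv.Perm α, F (π ∘ g) := by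
  obtain ⟨ρ, hρ⟩ := Equiv.Perm.exists_extending_pair f g hf hg
  rw [← Equiv.sum_comp (Equiv.mulRight ρ)]
  congr! 2 with π
  ext a
  simp [hρ]

theorem sum_perm_apply_eq {M : Type*} [AddCommMonoid M] (F : α → M) (k k' : α) :
    ∑ π : Equiv.Perm α, F (π k) = ∑ π : Equiv.Perm α, F (π k') :=
  sum_perm_comp_eq_of_injective (fun φ : Unit → α => F (φ ()))
    (fun _ _ _ => rfl : (fun _ => k).Injective) (fun _ _ _ => rfl : (fun _ => k').Injective)

theorem sum_perm_apply_apply_eq {M : Type*} [AddCommMonoid M] (G : α → α → M)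
    {k l k' l' : α} (hkl : k ≠ l) (hkl' : k' ≠ l') :
    ∑ π : Equiv.Perm α, G (π k) (π l) = ∑ π : Equiv.Perm α, G (π k') (π l') :=
  sum_perm_comp_eq_of_injective (fun φ : Fin 2 → α => G (φ 0) (φ 1))
    (injective_pair_iff_ne.mpr hkl) (injective_pair_iff_ne.mpr hkl')

theorem sum_perm_apply {M : Type*} [AddCommMonoid M] [IsAddTorsionFree M] (f : α → M) (k : α) :
    ∑ π : Equiv.Perm α, f (π k) = (Fintype.card α - 1).factorial • ∑ m, f m := by
  have hcard : Fintype.card α ≠ 0 := (Fintype.card_pos_iff.mpr ⟨k⟩).ne'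
  refine IsAddTorsionFree.nsmul_right_injective hcard ?_
  calc Fintype.card α • ∑ π : Equiv.Perm α, f (π k)
      = ∑ k', ∑ π : Equiv.Perm α, f (π k') := by
        rw [sum_congr rfl fun k' _ => sum_perm_apply_eq f k' k, sum_const, card_univ]
    _ = ∑ π : Equiv.Perm α, ∑ m, f m := by
        rw [sum_comm]; exact sum_congr rfl fun π _ => Equiv.sum_comp π f
    _ = Fintype.card α • (Fintype.card α - 1).factorial • ∑ m, f m := by
        rw [sum_const, card_univ, Fintype.card_perm, smul_smul, Nat.mul_factorial_pred hcard]

end PermutationSums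

theorem avg_pi_apply {ι G : Type*} [Fintype ι] [DecidableEq ι] [Fintype G] [Nonempty G]
    (i : ι) (f : G → ℝ) :
    (Fintype.card (ι → G) : ℝ)⁻¹ * ∑ σ : ι → G, f (σ i) = (Fintype.card G : ℝ)⁻¹ * ∑ g, f g := by
  let e := Equiv.funSplitAt i G
  have hsum : ∑ σ : ι → G, f (σ i) = Fintype.card ({j // j ≠ i} → G) * ∑ g, f g := by
    rw [← e.symm.sum_comp, Fintype.sum_prod_type, sum_comm]
    simp [e, mul_sum]
  have hcard : (Fintype.card (ι → G) : ℝ) =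
      Fintype.card G * Fintype.card ({j // j ≠ i} → G) := by
    rw [Fintype.card_congr e, Fintype.card_prod, Nat.cast_mul]
  have : (Fintype.card ({j // j ≠ i} → G) : ℝ) ≠ 0 := by positivity
  rw [hsum, hcard, mul_inv, mul_assoc, inv_mul_cancel_left₀ this]

section PermutationMoments

variable {α E : Type*} [Fintype α] [NormedAddCommGroup E] [InnerProductSpace ℝ E]

theorem norm_sum_smul_sq (c : α → ℝ) (v : α → E) :
    ‖∑ k, c k • v k‖ ^ 2 = ∑ k, ∑ l, c k * c l * ⟪v k, v l⟫ := by
  simp_rw [← real_inner_self_eq_norm_sq, sum_inner, inner_sum, real_inner_smul_left,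
    real_inner_smul_right, mul_assoc]

variable [DecidableEq α]

theorem sum_perm_inner_apply_apply_of_ne {u : α → E} (hu : ∑ m, u m = 0) {k l : α}
    (hkl : k ≠ l) :
    ∑ π : Equiv.Perm α, ⟪u (π k), u (π l)⟫ =
      -((Fintype.card α - 2).factorial * ∑ m, ‖u m‖ ^ 2) := by
  set n := Fintype.card α
  set t := ∑ π : Equiv.Perm α, ⟪u (π k), u (π l)⟫
  have hn : 2 ≤ n := Fintype.one_lt_card_iff.mpr ⟨k, l, hkl⟩
  have hrow : ∑ l', ∑ π : Equiv.Perm α, ⟪u (π k), u (π l')⟫ = 0 := by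
    rw [sum_comm]
    refine sum_eq_zero fun π _ => ?_
    rw [← inner_sum, Equiv.sum_comp π u, hu, inner_zero_right]
  have hdiag : ∑ π : Equiv.Perm α, ⟪u (π k), u (π k)⟫ = (n - 1).factorial * ∑ m, ‖u m‖ ^ 2 := by
    simp_rw [real_inner_self_eq_norm_sq]
    rw [sum_perm_apply (fun m => ‖u m‖ ^ 2), nsmul_eq_mul]
  have hoff : ∑ l' ∈ univ.erase k, ∑ π : Equiv.Perm α, ⟪u (π k), u (π l')⟫ = (n - 1 : ℕ) * t := by
    rw [sum_congr rfl fun l' hl' =>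
        sum_perm_apply_apply_eq (fun a b => ⟪u a, u b⟫) (ne_of_mem_erase hl').symm hkl,
      sum_const, card_erase_of_mem (mem_univ k), card_univ, nsmul_eq_mul]
  rw [← add_sum_erase _ _ (mem_univ k), hdiag, hoff] at hrow
  have hfac : ((n - 1).factorial : ℝ) = (n - 1 : ℕ) * (n - 2).factorial := by
    rw [show n - 1 = (n - 2) + 1 by omega, Nat.factorial_succ]; push_cast; ring
  have hn1 : ((n - 1 : ℕ) : ℝ) ≠ 0 := by exact_mod_cast (by omega : n - 1 ≠ 0)
  rw [hfac] at hrow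
  apply mul_left_cancel₀ hn1
  linear_combination hrow

theorem sum_perm_inner_apply_apply {u : α → E} (hu : ∑ m, u m = 0) (hα : 2 ≤ Fintype.card α)
    (k l : α) :
    ∑ π : Equiv.Perm α, ⟪u (π k), u (π l)⟫ =
      (Fintype.card α - 2).factorial * ((if k = l then (Fintype.card α : ℝ) else 0) - 1) *
        ∑ m, ‖u m‖ ^ 2 := by
  split_ifs with hkl
  · subst hkl
    simp_rw [real_inner_self_eq_norm_sq]
    rw [sum_perm_apply (fun m => ‖u m‖ ^ 2), nsmul_eq_mul,
      show Fintype.card α - 1 = (Fintype.card α - 2) + 1 by omega, Nat.factorial_succ]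
    push_cast [hα]
    ring
  · rw [sum_perm_inner_apply_apply_of_ne hu hkl]
    ring

theorem sum_perm_sum_smul_apply {u : α → E} (hu : ∑ m, u m = 0) (c : α → ℝ) :
    ∑ π : Equiv.Perm α, ∑ k, c k • u (π k) = 0 := by
  have : IsAddTorsionFree E := .of_isTorsionFree ℝ E
  rw [sum_comm]
  refine sum_eq_zero fun k _ => ?_
  rw [← smul_sum, sum_perm_apply u k, hu, smul_zero, smul_zero]

theorem sum_perm_norm_sum_smul_apply_sq {u : α → E} (hu : ∑ m, u m = 0)
    (hα : 2 ≤ Fintype.card α) (c : α → ℝ) :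
    ∑ π : Equiv.Perm α, ‖∑ k, c k • u (π k)‖ ^ 2 =
      (Fintype.card α - 2).factorial * (Fintype.card α * ∑ k, c k ^ 2 - (∑ k, c k) ^ 2) *
        ∑ m, ‖u m‖ ^ 2 := by
  set n := Fintype.card α
  have hquad : ∑ k, ∑ l, c k * c l * ((if k = l then (n : ℝ) else 0) - 1) =
      n * ∑ k, c k ^ 2 - (∑ k, c k) ^ 2 := by
    simp only [mul_sub, mul_one, mul_ite, mul_zero, sum_sub_distrib, sum_ite_eq, mem_univ, if_true]
    rw [sq, sum_mul_sum, mul_sum]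
    congr 1
    exact sum_congr rfl fun k _ => by ring
  calc ∑ π : Equiv.Perm α, ‖∑ k, c k • u (π k)‖ ^ 2
      = ∑ k, ∑ l, c k * c l * ∑ π : Equiv.Perm α, ⟪u (π k), u (π l)⟫ := by
        simp_rw [norm_sum_smul_sq, mul_sum]
        rw [sum_comm]
        exact sum_congr rfl fun k _ => sum_comm
    _ = ∑ k, ∑ l, ((n - 2).factorial * ∑ m, ‖u m‖ ^ 2) *
          (c k * c l * ((if k = l then (n : ℝ) else 0) - 1)) := by
        refine sum_congr rfl fun k _ => sum_congr rfl fun l _ => ?_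
        rw [sum_perm_inner_apply_apply hu hα]
        ring
    _ = _ := by
        simp only [← mul_sum]
        rw [hquad]
        ring

end PermutationMoments

section PointClouds

theorem sum_norm_add_sq_of_sum_eq_zero {ι E : Type*} [Fintype ι] [NormedAddCommGroup E]
    [InnerProductSpace ℝ E] {v : ι → E} (hv : ∑ i, v i = 0) (b : E) :
    ∑ i, ‖v i + b‖ ^ 2 = ∑ i, ‖v i‖ ^ 2 + Fintype.card ι * ‖b‖ ^ 2 := by
  simp_rw [norm_add_sq_real, sum_add_distrib, ← mul_sum, ← sum_inner, hv, inner_zero_left,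
    mul_zero, add_zero, sum_const, card_univ, nsmul_eq_mul]

variable {V : Type*} [Fintype V] {d : ℕ}

theorem sum_sub_uMu_eq_zero (X : V → EuclideanSpace ℝ (Fin d)) : ∑ v, (X v - uMu X) = 0 := by
  rcases isEmpty_or_nonempty V with hV | hV
  · simp
  · rw [sum_sub_distrib, sum_const, card_univ, uMu, ← Nat.cast_smul_eq_nsmul ℝ, smul_smul,
      mul_inv_cancel₀ (by positivity), one_smul, sub_self]

theorem card_mul_uRg2 (X : V → EuclideanSpace ℝ (Fin d)) :
    Fintype.card V * uRg2 X = ∑ v, ‖X v - uMu X‖ ^ 2 := by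
  rcases isEmpty_or_nonempty V with hV | hV
  · simp
  · rw [uRg2, mul_inv_cancel_left₀ (by positivity)]

theorem sum_norm_sub_sq_eq_card_mul_uRg2_add (X : V → EuclideanSpace ℝ (Fin d))
    (A : EuclideanSpace ℝ (Fin d)) :
    ∑ v, ‖X v - A‖ ^ 2 = Fintype.card V * (uRg2 X + ‖uMu X - A‖ ^ 2) := by
  simp_rw [show ∀ v, X v - A = (X v - uMu X) + (uMu X - A) from fun v => by abel]
  rw [sum_norm_add_sq_of_sum_eq_zero (sum_sub_uMu_eq_zero X), ← card_mul_uRg2, mul_add]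

theorem sum_card_filter_smul {ι M : Type*} [Fintype ι] [DecidableEq V] [AddCommMonoid M]
    [Module ℝ M] (g : ι → V) (X : V → M) :
    ∑ k, ((univ.filter fun i => g i = k).card : ℝ) • X k = ∑ i, X (g i) := by
  rw [← sum_fiberwise' univ g X]
  simp_rw [sum_const, Nat.cast_smul_eq_nsmul]

theorem com_degree_eq_uMu_midpoint {ι : Type*} [Fintype ι] [DecidableEq V] (head tl : ι → V)
    (X : V → EuclideanSpace ℝ (Fin d)) :
    com X (fun k => ((univ.filter fun i => head i = k).card : ℝ)
        + ((univ.filter fun i => tl i = k).card : ℝ))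
      = uMu (fun i => (2 : ℝ)⁻¹ • (X (head i) + X (tl i))) := by
  have hcard (g : ι → V) : ∑ k, ((univ.filter fun i => g i = k).card : ℝ) = Fintype.card ι := by
    simpa using sum_card_filter_smul g (fun _ => (1 : ℝ))
  simp only [com, uMu, add_smul, sum_add_distrib, sum_card_filter_smul, hcard, ← smul_sum,
    smul_smul, smul_add]
  rw [← two_mul, mul_inv, mul_comm]

end PointClouds

theorem sum_range_cast (m : ℕ) : ∑ j ∈ range m, (j : ℝ) = m * (m - 1) / 2 := by
  induction m with
  | zero => simp
  | succ p ih => rw [sum_range_succ, ih]; push_cast; ring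

theorem sum_range_cast_sq (m : ℕ) :
    ∑ j ∈ range m, (j : ℝ) ^ 2 = m * (m - 1) * (2 * m - 1) / 6 := by
  induction m with
  | zero => simp
  | succ p ih => rw [sum_range_succ, ih]; push_cast; ring

theorem sum_fin_ite_le {M : Type*} [AddCommMonoid M] (m k : ℕ) (x : M) :
    ∑ j : Fin m, (if k ≤ (j : ℕ) then x else 0) = (m - k) • x := by
  rw [Fin.sum_univ_eq_sum_range (fun j => if k ≤ j then x else 0), ← sum_filter,
    show (range m).filter (k ≤ ·) = Ico k m by ext; simp [and_comm], sum_const, Nat.card_Ico]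

/-- The `k`-th displacement along a subdivided edge precedes `n - 1 - k` of its `n - 1` interior
points. -/
noncomputable def meanWeight (n : ℕ) (k : Fin n) : ℝ := ((n - 1 - k : ℕ) : ℝ) / ((n : ℝ) - 1)

section meanWeight

variable {n : ℕ} (hn : 2 ≤ n)
include hn

theorem sum_meanWeight : ∑ k, meanWeight n k = n / 2 := by
  have : (n : ℝ) - 1 ≠ 0 := by
    have : (2 : ℝ) ≤ n := by exact_mod_cast hn
    linarith
  simp only [meanWeight]
  rw [← sum_div, Fin.sum_univ_eq_sum_range (fun j => ((n - 1 - j : ℕ) : ℝ)),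
    sum_range_reflect (fun j => (j : ℝ)), sum_range_cast]
  field_simp

theorem card_mul_sum_meanWeight_sq_sub :
    n * ∑ k, meanWeight n k ^ 2 - (∑ k, meanWeight n k) ^ 2 = n ^ 2 * (n + 1) / (12 * (n - 1)) := by
  have : (n : ℝ) - 1 ≠ 0 := by
    have : (2 : ℝ) ≤ n := by exact_mod_cast hn
    linarith
  simp_rw [sum_meanWeight hn, meanWeight, div_pow]
  rw [← sum_div, Fin.sum_univ_eq_sum_range (fun j => ((n - 1 - j : ℕ) : ℝ) ^ 2),
    sum_range_reflect (fun j => (j : ℝ) ^ 2), sum_range_cast_sq]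
  field_simp
  ring

theorem uMu_xpos {d v' e' : ℕ} (X' : Fin v' → EuclideanSpace ℝ (Fin d))
    (tl : Fin e' → Fin v') (w : Fin e' → Fin n → EuclideanSpace ℝ (Fin d))
    (σ : Fin e' → Equiv.Perm (Fin n)) (i : Fin e') :
    uMu (xpos X' tl w σ i) = X' (tl i) + ∑ k, meanWeight n k • w i (σ i k) := by
  have hn1 : ((n - 1 : ℕ) : ℝ) = n - 1 := by push_cast [show 1 ≤ n by omega]; ring
  have hn1' : (n : ℝ) - 1 ≠ 0 := by rw [← hn1]; exact_mod_cast (by omega : n - 1 ≠ 0)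
  simp only [uMu, xpos, Fintype.card_fin, hn1, sum_add_distrib, sum_const, card_univ]
  rw [sum_comm]
  simp_rw [sum_fin_ite_le, ← Nat.cast_smul_eq_nsmul ℝ, hn1, smul_add, smul_smul,
    inv_mul_cancel₀ hn1', one_smul, smul_sum, smul_smul, meanWeight, div_eq_inv_mul]

end meanWeight

theorem avg_perm_norm_sq_subdivision_mean {d n : ℕ} (hn : 2 ≤ n)
    {p q : EuclideanSpace ℝ (Fin d)} (w : Fin n → EuclideanSpace ℝ (Fin d))
    (hw : ∑ k, w k = q - p) (A : EuclideanSpace ℝ (Fin d)) :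
    (n.factorial : ℝ)⁻¹ * ∑ π : Equiv.Perm (Fin n), ‖p + ∑ k, meanWeight n k • w (π k) - A‖ ^ 2
      = ‖(2 : ℝ)⁻¹ • (q + p) - A‖ ^ 2
        + (n : ℝ) ^ 2 * ((n : ℝ) + 1) / (12 * ((n : ℝ) - 1) ^ 2) * uRg2 w := by
  have hn' : (2 : ℝ) ≤ n := by exact_mod_cast hn
  have hu : ∑ k, (w k - uMu w) = 0 := sum_sub_uMu_eq_zero w
  have hsplit (π : Equiv.Perm (Fin n)) :
      p + ∑ k, meanWeight n k • w (π k) - A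
        = ∑ k, meanWeight n k • (w (π k) - uMu w) + ((2 : ℝ)⁻¹ • (q + p) - A) := by
    have hmean : uMu w = (n : ℝ)⁻¹ • (q - p) := by rw [uMu, hw, Fintype.card_fin]
    have hsum : ∑ k, meanWeight n k • (w (π k) - uMu w)
        = ∑ k, meanWeight n k • w (π k) - (∑ k, meanWeight n k) • uMu w := by
      simp only [smul_sub, sum_sub_distrib, sum_smul]
    have hhalf : (n : ℝ) / 2 * (n : ℝ)⁻¹ = 2⁻¹ := by field_simp
    rw [hsum, sum_meanWeight hn, hmean, smul_smul, hhalf]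
    module
  have hfac : (n.factorial : ℝ) = n * (n - 1) * (n - 2).factorial := by
    obtain ⟨m, rfl⟩ := Nat.exists_eq_add_of_le' hn
    simp [Nat.factorial_succ]
    ring
  have hS : ∑ k, ‖w k - uMu w‖ ^ 2 = n * uRg2 w := by rw [← card_mul_uRg2, Fintype.card_fin]
  simp_rw [hsplit]
  rw [sum_norm_add_sq_of_sum_eq_zero (sum_perm_sum_smul_apply hu _),
    sum_perm_norm_sum_smul_apply_sq hu (by simpa using hn), Fintype.card_fin,
    card_mul_sum_meanWeight_sq_sub hn, hS, Fintype.card_perm, Fintype.card_fin, hfac]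
  have : (n : ℝ) - 1 ≠ 0 := by linarith
  have : ((n - 2).factorial : ℝ) ≠ 0 := by positivity
  field_simp
  ring

theorem average_sq_dist_to_junction_mean_general {d n v' e' : ℕ}
    (hn : 2 ≤ n)
    (head tl : Fin e' → Fin v')
    (X' : Fin v' → EuclideanSpace ℝ (Fin d))
    (w : Fin e' → Fin n → EuclideanSpace ℝ (Fin d))
    (hw : ∀ i, ∑ j, w i j = X' (head i) - X' (tl i)) :
    (Fintype.card (Fin e' → Equiv.Perm (Fin n)) : ℝ)⁻¹ *
        ∑ σ : Fin e' → Equiv.Perm (Fin n), ∑ i : Fin e',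
          ‖uMu (fun j : Fin (n - 1) => xpos X' tl w σ i j) - uMu X'‖ ^ 2
      = (e' : ℝ) *
          (uRg2 (fun i : Fin e' => (2 : ℝ)⁻¹ • (X' (head i) + X' (tl i)))
            + ‖com X' (fun k =>
                  (((univ.filter fun i => head i = k).card : ℝ)
                    + ((univ.filter fun i => tl i = k).card : ℝ))) - uMu X'‖ ^ 2)
        + ((n : ℝ) ^ 2 * ((n : ℝ) + 1) / (12 * ((n : ℝ) - 1) ^ 2)) *
            ∑ i : Fin e', uRg2 (w i) := by
  calc (Fintype.card (Fin e' → Equiv.Perm (Fin n)) : ℝ)⁻¹ *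
        ∑ σ : Fin e' → Equiv.Perm (Fin n), ∑ i : Fin e',
          ‖uMu (fun j : Fin (n - 1) => xpos X' tl w σ i j) - uMu X'‖ ^ 2
      = ∑ i : Fin e', (n.factorial : ℝ)⁻¹ * ∑ π : Equiv.Perm (Fin n),
          ‖X' (tl i) + ∑ k, meanWeight n k • w i (π k) - uMu X'‖ ^ 2 := by
        rw [sum_comm, mul_sum]
        refine sum_congr rfl fun i _ => ?_
        simp_rw [uMu_xpos hn]
        rw [avg_pi_apply i fun π : Equiv.Perm (Fin n) =>
            ‖X' (tl i) + ∑ k, meanWeight n k • w i (π k) - uMu X'‖ ^ 2,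
          Fintype.card_perm, Fintype.card_fin]
    _ = ∑ i : Fin e', (‖(2 : ℝ)⁻¹ • (X' (head i) + X' (tl i)) - uMu X'‖ ^ 2
          + (n : ℝ) ^ 2 * ((n : ℝ) + 1) / (12 * ((n : ℝ) - 1) ^ 2) * uRg2 (w i)) :=
        sum_congr rfl fun i _ => avg_perm_norm_sq_subdivision_mean hn (w i) (hw i) (uMu X')
    _ = _ := by
        rw [sum_add_distrib, sum_norm_sub_sq_eq_card_mul_uRg2_add, com_degree_eq_uMu_midpoint,
          Fintype.card_fin, mul_sum]

/-- Symmetrized fourth term: the average over `σ ∈ S` of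
`Σᵢ ‖μ(X^σ_i) − μ(X')‖²` equals
`e'·(Rg²(M') + ‖μ(X',deg) − μ(X')‖²) + (n²(n+1)/(12(n−1)²))·Σᵢ Rg²(Wᵢ)`,
where `M'` is the cloud of edge midpoints and `deg` is the vertex-degree weighting. -/
theorem average_sq_dist_to_junction_mean {d n v' e' : ℕ}
    (hd : 1 ≤ d) (hn : 2 ≤ n) (hv' : 1 ≤ v') (he' : 1 ≤ e')
    (head tl : Fin e' → Fin v')
    (X' : Fin v' → EuclideanSpace ℝ (Fin d))
    (w : Fin e' → Fin n → EuclideanSpace ℝ (Fin d))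
    (hw : ∀ i, ∑ j, w i j = X' (head i) - X' (tl i))
    (hdeg : ∀ k : Fin v',
      0 < (univ.filter fun i => head i = k).card + (univ.filter fun i => tl i = k).card) :
    (Fintype.card (Fin e' → Equiv.Perm (Fin n)) : ℝ)⁻¹ *
        ∑ σ : Fin e' → Equiv.Perm (Fin n), ∑ i : Fin e',
          ‖uMu (fun j : Fin (n - 1) => xpos X' tl w σ i j) - uMu X'‖ ^ 2
      = (e' : ℝ) *
          (uRg2 (fun i : Fin e' => (2 : ℝ)⁻¹ • (X' (head i) + X' (tl i)))
            + ‖com X' (fun k =>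
                  (((univ.filter fun i => head i = k).card : ℝ)
                    + ((univ.filter fun i => tl i = k).card : ℝ))) - uMu X'‖ ^ 2)
        + ((n : ℝ) ^ 2 * ((n : ℝ) + 1) / (12 * ((n : ℝ) - 1) ^ 2)) *
            ∑ i : Fin e', uRg2 (w i) :=
  average_sq_dist_to_junction_mean_general hn head tl X' w hw
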